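/- Let U and V be two bounded solutions of a first-order linear ODE system on (0,∞) taking values in ℂ², with sup norms M_U, M_V < ∞, and suppose the Wronskian W[U,V](x) = U(x)ᵗ J V(x), with J = [[0, i],[-i, 0]], is a nonzero constant W. Then for all x > 0, (∫₀ˣ ‖U(t)‖² dt) / (∫₀ˣ ‖V(t)‖² dt) ≥ |W|² / M_V⁴ > 0; in particular U is not subordinate to V, i.e. the ratio of integrals does not tend to 0 as x → ∞. -/

import Mathlib

/-!
The Wronskian is bounded by the product of the norms, `|W| ≤ ‖U t‖ ‖V t‖`. Hence `V` never
vanishes and `‖U t‖² ≥ |W|² / M_V²`, while `‖V t‖² ≤ M_V²`. Integrating over `(0, x]` gives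
`∫₀ˣ ‖U‖² ≥ x |W|² / M_V²` and `0 < ∫₀ˣ ‖V‖² ≤ x M_V²`, so the ratio stays above `|W|² / M_V⁴`.
-/

open MeasureTheory Filter

def wronskian (u v : EuclideanSpace ℂ (Fin 2)) : ℂ :=
  u 0 * (Complex.I * v 1) + u 1 * (-Complex.I * v 0)

theorem norm_wronskian_le (u v : EuclideanSpace ℂ (Fin 2)) :
    ‖wronskian u v‖ ≤ ‖u‖ * ‖v‖ := by
  have hu := EuclideanSpace.norm_sq_eq u
  have hv := EuclideanSpace.norm_sq_eq v
  simp only [Fin.sum_univ_two] at hu hv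
  calc ‖wronskian u v‖ ≤ ‖u 0‖ * ‖v 1‖ + ‖u 1‖ * ‖v 0‖ :=
        (norm_add_le _ _).trans_eq (by simp)
    _ ≤ ‖u‖ * ‖v‖ := by
        refine le_of_pow_le_pow_left₀ two_ne_zero (by positivity) ?_
        rw [mul_pow, hu, hv]
        nlinarith [sq_nonneg (‖u 0‖ * ‖v 0‖ - ‖u 1‖ * ‖v 1‖)]

theorem div_le_setIntegral_div_setIntegral {X : Type*} [MeasurableSpace X] {μ : Measure X}
    {s : Set X} {f g : X → ℝ} {a b : ℝ} (hs : MeasurableSet s) (hμs : μ s ≠ ⊤)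
    (hμs₀ : μ s ≠ 0) (hf : IntegrableOn f s μ) (hg : IntegrableOn g s μ) (ha : 0 ≤ a)
    (haf : ∀ x ∈ s, a ≤ f x) (hgb : ∀ x ∈ s, g x ≤ b) (hg₀ : ∀ x ∈ s, 0 < g x) :
    a / b ≤ (∫ x in s, f x ∂μ) / ∫ x in s, g x ∂μ := by
  have hμ : 0 < μ.real s := ENNReal.toReal_pos hμs₀ hμs
  have hf_int : a * μ.real s ≤ ∫ x in s, f x ∂μ := setIntegral_ge_of_const_le_real hs hμs haf hf
  have hg_int : ∫ x in s, g x ∂μ ≤ b * μ.real s :=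
    calc ∫ x in s, g x ∂μ ≤ ∫ _ in s, b ∂μ :=
          setIntegral_mono_on hg (integrableOn_const hμs) hs hgb
      _ = b * μ.real s := by rw [setIntegral_const, smul_eq_mul, mul_comm]
  have hg_pos : 0 < ∫ x in s, g x ∂μ := by
    rw [setIntegral_pos_iff_support_of_nonneg_ae
      ((ae_restrict_iff' hs).2 (.of_forall fun x hx => (hg₀ x hx).le)) hg,
      Set.inter_eq_self_of_subset_right (s := Function.support g) fun x hx => (hg₀ x hx).ne']
    exact pos_iff_ne_zero.2 hμs₀
  calc a / b = a * μ.real s / (b * μ.real s) := (mul_div_mul_right a b hμ.ne').symm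
    _ ≤ (∫ x in s, f x ∂μ) / ∫ x in s, g x ∂μ :=
        div_le_div₀ ((mul_nonneg ha hμ.le).trans hf_int) hf_int hg_pos hg_int

theorem stmt0_general (U V : ℝ → EuclideanSpace ℂ (Fin 2)) (M_V : ℝ) (W : ℂ)
    (hUc : Continuous U) (hVc : Continuous V)
    (hMV : ∀ x, ‖V x‖ ≤ M_V)
    (hW : ∀ x, U x 0 * (Complex.I * V x 1) + U x 1 * (-Complex.I * V x 0) = W)
    (hW0 : W ≠ 0) :
    (∀ x > 0, ‖W‖ ^ 2 / M_V ^ 4 ≤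
        (∫ t in Set.Ioc (0:ℝ) x, ‖U t‖ ^ 2) / (∫ t in Set.Ioc (0:ℝ) x, ‖V t‖ ^ 2)) ∧
    0 < ‖W‖ ^ 2 / M_V ^ 4 ∧
    ¬ Tendsto (fun x => (∫ t in Set.Ioc (0:ℝ) x, ‖U t‖ ^ 2) /
        (∫ t in Set.Ioc (0:ℝ) x, ‖V t‖ ^ 2)) atTop (nhds 0) := by
  have hW_pos : 0 < ‖W‖ := norm_pos_iff.2 hW0
  have hWUV : ∀ t, ‖W‖ ≤ ‖U t‖ * ‖V t‖ := fun t => hW t ▸ norm_wronskian_le (U t) (V t)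
  have hV_pos : ∀ t, 0 < ‖V t‖ :=
    fun t => pos_of_mul_pos_right (hW_pos.trans_le (hWUV t)) (norm_nonneg _)
  have hMV_pos : 0 < M_V := (hV_pos 0).trans_le (hMV 0)
  have hU_lower : ∀ t, ‖W‖ ^ 2 / M_V ^ 2 ≤ ‖U t‖ ^ 2 := fun t =>
    div_le_of_le_mul₀ (by positivity) (by positivity) <| by
      rw [← mul_pow]
      exact pow_le_pow_left₀ hW_pos.le
        ((hWUV t).trans (mul_le_mul_of_nonneg_left (hMV t) (norm_nonneg _))) 2
  have hratio : ∀ x > (0:ℝ), ‖W‖ ^ 2 / M_V ^ 4 ≤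
      (∫ t in Set.Ioc (0:ℝ) x, ‖U t‖ ^ 2) / (∫ t in Set.Ioc (0:ℝ) x, ‖V t‖ ^ 2) := by
    intro x hx
    convert div_le_setIntegral_div_setIntegral (μ := volume)
      (f := fun t => ‖U t‖ ^ 2) (g := fun t => ‖V t‖ ^ 2) measurableSet_Ioc measure_Ioc_lt_top.ne
      (by simpa using hx) (hUc.norm.pow 2).integrableOn_Ioc (hVc.norm.pow 2).integrableOn_Ioc
      (by positivity) (fun t _ => hU_lower t)
      (fun t _ => pow_le_pow_left₀ (norm_nonneg _) (hMV t) 2)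
      (fun t _ => pow_pos (hV_pos t) 2) using 1
    ring
  have hbound_pos : 0 < ‖W‖ ^ 2 / M_V ^ 4 := by positivity
  refine ⟨hratio, hbound_pos, fun hlim => hbound_pos.not_ge ?_⟩
  exact ge_of_tendsto hlim ((eventually_gt_atTop 0).mono hratio)

/-- Two bounded solutions with constant nonzero Wronskian; lower bound on
the ratio of L² norms and absence of subordinacy. -/
theorem stmt0 (U V : ℝ → EuclideanSpace ℂ (Fin 2)) (M_U M_V : ℝ) (W : ℂ)
    (hUc : Continuous U) (hVc : Continuous V)
    (hMU : ∀ x, ‖U x‖ ≤ M_U) (hMV : ∀ x, ‖V x‖ ≤ M_V)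
    (hW : ∀ x, U x 0 * (Complex.I * V x 1) + U x 1 * (-Complex.I * V x 0) = W)
    (hW0 : W ≠ 0) :
    (∀ x > 0, ‖W‖ ^ 2 / M_V ^ 4 ≤
        (∫ t in Set.Ioc (0:ℝ) x, ‖U t‖ ^ 2) / (∫ t in Set.Ioc (0:ℝ) x, ‖V t‖ ^ 2)) ∧
    0 < ‖W‖ ^ 2 / M_V ^ 4 ∧
    ¬ Tendsto (fun x => (∫ t in Set.Ioc (0:ℝ) x, ‖U t‖ ^ 2) /
        (∫ t in Set.Ioc (0:ℝ) x, ‖V t‖ ^ 2)) atTop (nhds 0) :=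
  stmt0_general U V M_V W hUc hVc hMV hW hW0
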